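/- arXiv:2011.14926 — 2 statements merged into one kernel-verified Lean document; each statement's English description precedes it below -/
import Mathlib

section
/- In an SMC quadruple (T, T^p, S, S-collection), for any objects X, Y of T the direct system Hom_T(Y, X) → Hom_T(Y, X_{≤0}) → Hom_T(Y, X_{≤-1}) → ⋯ obtained by applying Hom(Y,−) to a fixed direct system of truncations stabilizes: the maps Hom(Y, X_{≤-i}) → Hom(Y, X_{≤-i-1}) are isomorphisms for all i sufficiently large. -/
open CategoryTheory Category Limits Pretriangulated
open scoped Classical

universe v u

variable (k : Type) [Field k]
variable (T : Type u) [Category.{v} T] [Preadditive T] [Linear k T] [HasZeroObject T]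
  [HasShift T ℤ] [∀ n : ℤ, (shiftFunctor T n).Additive] [Pretriangulated T]

/-- `T_{>i} = ⊥(Σ^{>-i-1}𝒮)`. -/
def Tgt (𝒮 : Set T) (i : ℤ) : Set T :=
  {X | ∀ (j : ℤ), j > -i - 1 → ∀ s ∈ 𝒮, ∀ f : X ⟶ s⟦j⟧, f = 0}

/-- `T_{≤i} = ⊥(Σ^{<-i}𝒮)`. -/
def Tle (𝒮 : Set T) (i : ℤ) : Set T :=
  {X | ∀ (j : ℤ), j < -i → ∀ s ∈ 𝒮, ∀ f : X ⟶ s⟦j⟧, f = 0}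

/-- `(Σ^{≥0}𝒮)^⊥`. -/
def perpGE (𝒮 : Set T) : Set T :=
  {X | ∀ (j : ℤ), 0 ≤ j → ∀ s ∈ 𝒮, ∀ f : s⟦j⟧ ⟶ X, f = 0}

/-- `(Σ^{<0}𝒮)^⊥`. -/
def perpLT (𝒮 : Set T) : Set T :=
  {X | ∀ (j : ℤ), j < 0 → ∀ s ∈ 𝒮, ∀ f : s⟦j⟧ ⟶ X, f = 0}

/-- A torsion pair `(𝒳, 𝒴)` on a triangulated category. -/
structure IsTorsionPair (𝒳 𝒴 : Set T) : Prop where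
  orth : ∀ X ∈ 𝒳, ∀ Y ∈ 𝒴, ∀ f : X ⟶ Y, f = 0
  tri : ∀ A : T, ∃ (X Y : T) (_ : X ∈ 𝒳) (_ : Y ∈ 𝒴)
    (f : X ⟶ A) (g : A ⟶ Y) (h : Y ⟶ X⟦(1 : ℤ)⟧),
    Triangle.mk f g h ∈ distTriang T

/-- A triangulated subcategory (the Mathlib structure `Triangulated.Subcategory` of Dec 2024,
removed since; restated here with its old fields). -/
structure Triangulated.Subcategory (C : Type*) [Category C] [HasZeroObject C] [HasShift C ℤ]
    [Preadditive C] [∀ (n : ℤ), (shiftFunctor C n).Additive] [Pretriangulated C] where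
  P : C → Prop
  zero' : ∃ (Z : C) (_ : IsZero Z), P Z
  shift (X : C) (n : ℤ) : P X → P (X⟦n⟧)
  ext₂' (T : Triangle C) (_ : T ∈ distTriang C) : P T.obj₁ → P T.obj₃ →
    ∃ (Y : C) (_ : P Y), Nonempty (T.obj₂ ≅ Y)

/-- A triangulated subcategory is thick if it is closed under retracts (direct summands). -/
def IsThick (Q : Triangulated.Subcategory T) : Prop :=
  ∀ X Y : T, (∃ (r : X ⟶ Y) (s : Y ⟶ X), s ≫ r = 𝟙 Y) → Q.P X → Q.P Y

/-- An SMC quadruple `(T, T^p, 𝕊, 𝒮)`: `T` is a `k`-linear, Hom-finite, Krull–Schmidt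
(idempotent complete) triangulated category, `T^p` a thick subcategory, `𝕊` a triangle
auto-equivalence restricting to `T^p` together with a bifunctorial Serre duality
`D Hom(X, Y) ≅ Hom(Y, 𝕊X)` for `X ∈ T^p`, and `𝒮` a simple minded collection inducing the
two co-t-structures of (RS2), with `⊥(Σ^{≥0}𝒮) ⊆ T^p` and `(Σ^{<0}𝒮)^⊥ ⊆ T^p`. -/
structure SMCQuadruple where
  homFin : ∀ X Y : T, FiniteDimensional k (X ⟶ Y)
  idem : IsIdempotentComplete T
  P : Triangulated.Subcategory T
  thick : IsThick T P
  SS : T ≌ T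
  commShift : SS.functor.CommShift ℤ
  triangleFunctor : letI := commShift; SS.functor.IsTriangulated
  restrict : ∀ X : T, P.P X → P.P (SS.functor.obj X)
  restrictInv : ∀ X : T, P.P X → P.P (SS.inverse.obj X)
  serre : ∀ (X Y : T), P.P X → (((X ⟶ Y) →ₗ[k] k) ≃ₗ[k] (Y ⟶ SS.functor.obj X))
  serre_natY : ∀ (X Y Y' : T) (hX : P.P X) (g : Y ⟶ Y') (φ : (X ⟶ Y') →ₗ[k] k),
    serre X Y hX (φ.comp (Linear.rightComp k X g)) = g ≫ serre X Y' hX φ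
  serre_natX : ∀ (X X' Y : T) (hX : P.P X) (hX' : P.P X') (u : X ⟶ X')
    (φ : (X ⟶ Y) →ₗ[k] k),
    serre X' Y hX' (φ.comp (Linear.leftComp k Y u)) = serre X Y hX φ ≫ SS.functor.map u
  𝒮 : Set T
  smc_orth : ∀ X ∈ 𝒮, ∀ Y ∈ 𝒮, ∀ (j : ℤ), j < 0 → ∀ f : X ⟶ Y⟦j⟧, f = 0
  smc_dim : ∀ X ∈ 𝒮, ∀ Y ∈ 𝒮, Module.finrank k (X ⟶ Y) = if X = Y then 1 else 0
  smc_gen : ∀ Q : Triangulated.Subcategory T, IsThick T Q → (∀ s ∈ 𝒮, Q.P s) → ∀ X, Q.P X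
  cot1 : IsTorsionPair T (Tgt T 𝒮 0) (Tle T 𝒮 0)
  cot2 : IsTorsionPair T (perpGE T 𝒮) (perpLT T 𝒮)
  incl1 : Tgt T 𝒮 0 ⊆ P.P
  incl2 : perpLT T 𝒮 ⊆ P.P

/-!
The cone `C_p` of `ξ_p : X_{≤-p} → X_{≤-p-1}` lies in `T_{≤-p-1} ∩ T_{>-p-2}`, and the second
condition puts it in `T^p`. Since `𝒮` generates `T`, every object `W` has `Hom(T_{≤i}, W) = 0`
for some `i`. For `W = 𝕊Y`, Serre duality `Hom(Y, C) ≅ D Hom(𝕊⁻¹C, Y) ≅ D Hom(C, 𝕊Y)` then gives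
`Hom(Y, C_p) = Hom(Y, C_p⟦-1⟧) = 0` for `p ≫ 0`, and the long exact `Hom(Y, -)` sequence of
the triangle on `ξ_p` makes composition with `ξ_p` bijective.
-/

section Triangulated

variable {C : Type*} [Category C] [Preadditive C] [HasShift C ℤ] {𝒮 : Set C}

lemma Tle_mono : Monotone (Tle C 𝒮) :=
  fun _ _ hii' _ hZ j hj => hZ j (by omega)

variable [∀ n : ℤ, (shiftFunctor C n).Additive]

lemma shift_map_eq_zero {A B : C} (h : ∀ u : A ⟶ B, u = 0) (n : ℤ) (f : A⟦n⟧ ⟶ B⟦n⟧) :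
    f = 0 := by
  obtain ⟨u, rfl⟩ := (shiftFunctor C n).map_surjective f
  rw [h u, Functor.map_zero]

lemma shift_hom_eq_zero {A B : C} {m : ℤ} (h : ∀ u : A ⟶ B⟦m⟧, u = 0) (n : ℤ)
    (f : A⟦n⟧ ⟶ B⟦m + n⟧) : f = 0 := by
  rw [← cancel_mono ((shiftFunctorAdd C m n).app B).hom, zero_comp]
  exact shift_map_eq_zero h n _

lemma shift_mem_Tle {Z : C} {i : ℤ} (hZ : Z ∈ Tle C 𝒮 i) (n : ℤ) :
    Z⟦n⟧ ∈ Tle C 𝒮 (i - n) := by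
  intro j hj s hs f
  obtain ⟨m, rfl⟩ : ∃ m, j = m + n := ⟨j - n, by omega⟩
  exact shift_hom_eq_zero (hZ m (by omega) s hs) n f

lemma shift_mem_Tgt {Z : C} {i : ℤ} (hZ : Z ∈ Tgt C 𝒮 i) (n : ℤ) :
    Z⟦n⟧ ∈ Tgt C 𝒮 (i - n) := by
  intro j hj s hs f
  obtain ⟨m, rfl⟩ : ∃ m, j = m + n := ⟨j - n, by omega⟩
  exact shift_hom_eq_zero (hZ m (by omega) s hs) n f

variable [HasZeroObject C] [Pretriangulated C]

lemma hom_obj₃_eq_zero_of_distTriang {A B D W : C} {u : A ⟶ B} {v : B ⟶ D}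
    {w : D ⟶ A⟦(1 : ℤ)⟧} (hT : Triangle.mk u v w ∈ distTriang C)
    (hinj : ∀ φ : B ⟶ W, u ≫ φ = 0 → φ = 0)
    (hsurj : ∀ ρ : A⟦(1 : ℤ)⟧ ⟶ W, ∃ ρ' : B⟦(1 : ℤ)⟧ ⟶ W, ρ = u⟦(1 : ℤ)⟧' ≫ ρ')
    (φ : D ⟶ W) : φ = 0 := by
  have hvφ : v ≫ φ = 0 := hinj _ (by
    rw [← assoc, show u ≫ v = 0 from comp_distTriang_mor_zero₁₂ _ hT, zero_comp])
  obtain ⟨ρ, rfl⟩ : ∃ ρ : A⟦(1 : ℤ)⟧ ⟶ W, φ = w ≫ ρ := Triangle.yoneda_exact₃ _ hT φ hvφ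
  obtain ⟨ρ', rfl⟩ := hsurj ρ
  rw [← assoc, show w ≫ u⟦(1 : ℤ)⟧' = 0 from comp_distTriang_mor_zero₃₁ _ hT, zero_comp]

lemma eq_zero_of_comp_eq_zero_of_distTriang {A₂ X C₁ C₂ W : C} {f₂ : A₂ ⟶ X} {g₁ : X ⟶ C₁}
    {g₂ : X ⟶ C₂} {h₂ : C₂ ⟶ A₂⟦(1 : ℤ)⟧} {ξ : C₁ ⟶ C₂}
    (hT₂ : Triangle.mk f₂ g₂ h₂ ∈ distTriang C) (hξ : g₁ ≫ ξ = g₂)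
    (hW : ∀ u : A₂⟦(1 : ℤ)⟧ ⟶ W, u = 0) (φ : C₂ ⟶ W) (hφ : ξ ≫ φ = 0) : φ = 0 := by
  obtain ⟨ρ, rfl⟩ : ∃ ρ : A₂⟦(1 : ℤ)⟧ ⟶ W, φ = h₂ ≫ ρ :=
    Triangle.yoneda_exact₃ _ hT₂ φ (show g₂ ≫ φ = 0 by rw [← hξ, assoc, hφ, comp_zero])
  rw [hW ρ, comp_zero]

lemma exists_eq_comp_of_distTriang {A₁ A₂ X C₁ C₂ W : C} {f₁ : A₁ ⟶ X} {g₁ : X ⟶ C₁}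
    {h₁ : C₁ ⟶ A₁⟦(1 : ℤ)⟧} {f₂ : A₂ ⟶ X} {g₂ : X ⟶ C₂} {h₂ : C₂ ⟶ A₂⟦(1 : ℤ)⟧}
    {ξ : C₁ ⟶ C₂} (hT₁ : Triangle.mk f₁ g₁ h₁ ∈ distTriang C)
    (hT₂ : Triangle.mk f₂ g₂ h₂ ∈ distTriang C) (hξ : g₁ ≫ ξ = g₂)
    (hA₂ : ∀ u : A₂ ⟶ W, u = 0) (hA₁ : ∀ u : A₁⟦(1 : ℤ)⟧ ⟶ W, u = 0) (ρ : C₁ ⟶ W) :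
    ∃ ρ' : C₂ ⟶ W, ρ = ξ ≫ ρ' := by
  obtain ⟨ρ', hρ'⟩ : ∃ ρ' : C₂ ⟶ W, g₁ ≫ ρ = g₂ ≫ ρ' :=
    Triangle.yoneda_exact₂ _ hT₂ (g₁ ≫ ρ) (hA₂ _)
  refine ⟨ρ', ?_⟩
  obtain ⟨σ, hσ⟩ : ∃ σ : A₁⟦(1 : ℤ)⟧ ⟶ W, ρ - ξ ≫ ρ' = h₁ ≫ σ :=
    Triangle.yoneda_exact₃ _ hT₁ (ρ - ξ ≫ ρ')
      (show g₁ ≫ (ρ - ξ ≫ ρ') = 0 by rw [Preadditive.comp_sub, ← assoc, hξ, ← hρ', sub_self])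
  rwa [hA₁ σ, comp_zero, sub_eq_zero] at hσ

lemma bijective_comp_of_distTriang {C₁ C₂ D Y : C} {ξ : C₁ ⟶ C₂} {β : C₂ ⟶ D}
    {γ : D ⟶ C₁⟦(1 : ℤ)⟧} (hT : Triangle.mk ξ β γ ∈ distTriang C)
    (hD : ∀ u : Y ⟶ D, u = 0) (hD' : ∀ u : Y ⟶ D⟦(-1 : ℤ)⟧, u = 0) :
    Function.Bijective (fun u : Y ⟶ C₁ => u ≫ ξ) := by
  refine ⟨fun u₁ u₂ h => ?_, fun v => ?_⟩
  · obtain ⟨v, hv⟩ := Triangle.coyoneda_exact₂ _ (inv_rot_of_distTriang _ hT) (u₁ - u₂)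
      (show (u₁ - u₂) ≫ ξ = 0 by rw [Preadditive.sub_comp, sub_eq_zero]; exact h)
    exact sub_eq_zero.1 (hv.trans ((congrArg (· ≫ _) (hD' v)).trans zero_comp))
  · obtain ⟨u, hu⟩ := Triangle.coyoneda_exact₂ _ hT v (hD _)
    exact ⟨u, hu.symm⟩

lemma mem_Tle_of_distTriang {A B D : C} {u : A ⟶ B} {v : B ⟶ D} {w : D ⟶ A⟦(1 : ℤ)⟧}
    (hT : Triangle.mk u v w ∈ distTriang C) {i : ℤ} (hA : A ∈ Tle C 𝒮 i)
    (hB : B ∈ Tle C 𝒮 (i - 1)) : D ∈ Tle C 𝒮 (i - 1) := by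
  intro j hj s hs
  refine hom_obj₃_eq_zero_of_distTriang hT (fun φ _ => hB j hj s hs φ) fun ρ => ⟨0, ?_⟩
  rw [comp_zero]
  exact shift_mem_Tle hA 1 j hj s hs ρ

lemma mem_Tgt_of_distTriang {A₁ A₂ X C₁ C₂ D : C} {f₁ : A₁ ⟶ X} {g₁ : X ⟶ C₁}
    {h₁ : C₁ ⟶ A₁⟦(1 : ℤ)⟧} {f₂ : A₂ ⟶ X} {g₂ : X ⟶ C₂} {h₂ : C₂ ⟶ A₂⟦(1 : ℤ)⟧}
    {ξ : C₁ ⟶ C₂} {β : C₂ ⟶ D} {γ : D ⟶ C₁⟦(1 : ℤ)⟧}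
    (hT₁ : Triangle.mk f₁ g₁ h₁ ∈ distTriang C) (hT₂ : Triangle.mk f₂ g₂ h₂ ∈ distTriang C)
    (hξ : g₁ ≫ ξ = g₂) (hT : Triangle.mk ξ β γ ∈ distTriang C) {i : ℤ}
    (hA₁ : A₁ ∈ Tgt C 𝒮 i) (hA₂ : A₂ ∈ Tgt C 𝒮 (i - 1)) : D ∈ Tgt C 𝒮 (i - 2) := by
  intro j hj s hs
  have hA₂' : ∀ u : A₂⟦(1 : ℤ)⟧ ⟶ s⟦j⟧, u = 0 :=
    shift_mem_Tgt hA₂ 1 j (by omega) s hs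
  have hA₁' : ∀ u : A₁⟦(1 : ℤ)⟧⟦(1 : ℤ)⟧ ⟶ s⟦j⟧, u = 0 :=
    shift_mem_Tgt (shift_mem_Tgt hA₁ 1) 1 j (by omega) s hs
  refine hom_obj₃_eq_zero_of_distTriang hT (eq_zero_of_comp_eq_zero_of_distTriang hT₂ hξ hA₂')
    (exists_eq_comp_of_distTriang (Triangle.shift_distinguished _ hT₁ 1)
      (Triangle.shift_distinguished _ hT₂ 1) ?_ hA₂' hA₁')
  change ((1 : ℤ).negOnePow • g₁⟦(1 : ℤ)⟧') ≫ ξ⟦(1 : ℤ)⟧' = (1 : ℤ).negOnePow • g₂⟦(1 : ℤ)⟧'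
  rw [Linear.units_smul_comp, ← Functor.map_comp, hξ]

open ZeroObject in
variable (𝒮) in
def homVanishingFromTle : Triangulated.Subcategory C where
  P W := ∃ i, ∀ Z ∈ Tle C 𝒮 i, ∀ f : Z ⟶ W, f = 0
  zero' := ⟨0, isZero_zero C, 0, fun _ _ f => (isZero_zero C).eq_of_tgt f 0⟩
  shift W n := by
    rintro ⟨i, hi⟩
    refine ⟨i - n, fun Z hZ f => ?_⟩
    have hZ' : Z⟦-n⟧ ∈ Tle C 𝒮 i := Tle_mono (by omega) (shift_mem_Tle hZ (-n))
    rw [← cancel_epi ((shiftFunctorCompIsoId C (-n) n (by omega)).app Z).hom, comp_zero]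
    exact shift_map_eq_zero (hi _ hZ') n _
  ext₂' Tr hTr := by
    rintro ⟨i₁, h₁⟩ ⟨i₃, h₃⟩
    refine ⟨Tr.obj₂, ⟨min i₁ i₃, fun Z hZ f => ?_⟩, ⟨Iso.refl _⟩⟩
    obtain ⟨g, rfl⟩ :=
      Triangle.coyoneda_exact₂ Tr hTr f (h₃ Z (Tle_mono (min_le_right _ _) hZ) _)
    rw [h₁ Z (Tle_mono (min_le_left _ _) hZ) g, zero_comp]

lemma isThick_homVanishingFromTle : IsThick C (homVanishingFromTle 𝒮) := by
  rintro A B ⟨r, s, hsr⟩ ⟨i, hi⟩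
  refine ⟨i, fun Z hZ f => ?_⟩
  rw [← comp_id f, ← hsr, ← assoc, hi Z hZ (f ≫ s), zero_comp]

lemma mem_homVanishingFromTle {s : C} (hs : s ∈ 𝒮) : (homVanishingFromTle 𝒮).P s := by
  refine ⟨-1, fun Z hZ f => ?_⟩
  rw [← cancel_mono ((shiftFunctorZero C ℤ).app s).inv, zero_comp]
  exact hZ 0 (by omega) s hs _

lemma exists_Tle_hom_eq_zero
    (hgen : ∀ Q : Triangulated.Subcategory C, IsThick C Q → (∀ s ∈ 𝒮, Q.P s) → ∀ X, Q.P X)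
    (W : C) : ∃ i, ∀ Z ∈ Tle C 𝒮 i, ∀ f : Z ⟶ W, f = 0 :=
  hgen _ isThick_homVanishingFromTle (fun _ => mem_homVanishingFromTle) W

end Triangulated

namespace SMCQuadruple

variable {k T} (E : SMCQuadruple k T)

lemma Tgt_subset (i : ℤ) : Tgt T E.𝒮 i ⊆ E.P.P := by
  intro Z hZ
  have h₀ : Z⟦i⟧ ∈ Tgt T E.𝒮 0 := fun j hj => shift_mem_Tgt hZ i j (by omega)
  let e : Z⟦i⟧⟦-i⟧ ≅ Z := (shiftFunctorCompIsoId T i (-i) (by omega)).app Z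
  exact E.thick _ _ ⟨e.hom, e.inv, e.inv_hom_id⟩ (E.P.shift _ _ (E.incl1 h₀))

lemma hom_eq_zero_of_hom_SS_eq_zero {Y Z : T} (hZ : E.P.P Z)
    (hZY : ∀ u : Z ⟶ E.SS.functor.obj Y, u = 0) (f : Y ⟶ Z) : f = 0 := by
  let V := E.SS.inverse.obj Z
  let e : E.SS.functor.obj V ≅ Z := E.SS.counitIso.app Z
  have hVY : ∀ v : V ⟶ Y, v = 0 := fun v => E.SS.functor.map_injective <| by
    rw [Functor.map_zero, ← cancel_epi e.inv, comp_zero]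
    exact hZY _
  -- Serre duality: `Hom(Y, 𝕊V) ≅ D Hom(V, Y) = 0`.
  have hf : f ≫ e.inv = 0 := by
    rw [← (E.serre V Y (E.restrictInv Z hZ)).apply_symm_apply (f ≫ e.inv)]
    convert map_zero (E.serre V Y (E.restrictInv Z hZ))
    ext v
    rw [hVY v, map_zero, LinearMap.zero_apply]
  rw [← cancel_mono e.inv, hf, zero_comp]

lemma exists_hom_eq_zero_of_mem_Tle (Y : T) :
    ∃ i, ∀ Z, E.P.P Z → Z ∈ Tle T E.𝒮 i → ∀ f : Y ⟶ Z, f = 0 := by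
  obtain ⟨i, hi⟩ := exists_Tle_hom_eq_zero E.smc_gen (E.SS.functor.obj Y)
  exact ⟨i, fun Z hP hZ => E.hom_eq_zero_of_hom_SS_eq_zero hP (hi Z hZ)⟩

end SMCQuadruple

/-- In an SMC quadruple `(T, T^p, 𝕊, 𝒮)`, for any objects `X, Y` of `T` and any fixed
system of truncation triangles `X_{>-p} → X → X_{≤-p} → Σ X_{>-p}` with connecting maps
`ξ_p : X_{≤-p} → X_{≤-p-1}`, the direct system
`Hom(Y, X) → Hom(Y, X_{≤0}) → Hom(Y, X_{≤-1}) → ⋯` stabilizes: composition with `ξ_p`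
is bijective for all sufficiently large `p`. -/
theorem stmt6 (E : SMCQuadruple k T) (X Y : T)
    (Xgt Xle : ℕ → T)
    (hgt : ∀ p : ℕ, Xgt p ∈ Tgt T E.𝒮 (-(p : ℤ))) (hle : ∀ p : ℕ, Xle p ∈ Tle T E.𝒮 (-(p : ℤ)))
    (f : ∀ p : ℕ, Xgt p ⟶ X) (g : ∀ p : ℕ, X ⟶ Xle p)
    (h : ∀ p : ℕ, Xle p ⟶ (Xgt p)⟦(1 : ℤ)⟧)
    (htri : ∀ p, Triangle.mk (f p) (g p) (h p) ∈ distTriang T)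
    (ξ : ∀ p : ℕ, Xle p ⟶ Xle (p + 1)) (hξ : ∀ p, g p ≫ ξ p = g (p + 1)) :
    ∃ N : ℕ, ∀ p : ℕ, N ≤ p →
      Function.Bijective (fun u : Y ⟶ Xle p => u ≫ ξ p) := by
  obtain ⟨i, hi⟩ := E.exists_hom_eq_zero_of_mem_Tle Y
  refine ⟨(-i).toNat, fun p hp => ?_⟩
  obtain ⟨D, β, γ, hD⟩ := distinguished_cocone_triangle (ξ p)
  have hDle : D ∈ Tle T E.𝒮 (-p - 1) := mem_Tle_of_distTriang hD (hle p)
    (by simpa only [Nat.cast_succ, neg_add'] using hle (p + 1))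
  have hDgt : D ∈ Tgt T E.𝒮 (-p - 2) := mem_Tgt_of_distTriang (htri p) (htri (p + 1)) (hξ p) hD
    (hgt p) (by simpa only [Nat.cast_succ, neg_add'] using hgt (p + 1))
  have hDP : E.P.P D := E.Tgt_subset _ hDgt
  exact bijective_comp_of_distTriang hD (hi D hDP (Tle_mono (by omega) hDle))
    (hi _ (E.P.shift D (-1) hDP) (Tle_mono (by omega) (shift_mem_Tle hDle (-1))))
end

section
/- Let T be a Krull–Schmidt triangulated category and X' →^f X →^g X'' → ΣX' a triangle in T. If g is left minimal (any h : X'' → X'' with h∘g = g is an isomorphism) then f is right minimal (any e : X' → X' with f∘e = f is an isomorphism). Consequently, if f = 0 and f is right minimal then X' = 0 and g is an isomorphism X ≅ X''. -/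
open CategoryTheory Category Limits Pretriangulated

universe v u

variable {k : Type} [Field k]
variable {T : Type u} [Category.{v} T] [Preadditive T] [Linear k T] [HasZeroObject T]
  [HasShift T ℤ] [∀ n : ℤ, (shiftFunctor T n).Additive] [Pretriangulated T]

/-- A morphism `g : X ⟶ Y` is left minimal if any `h : Y ⟶ Y` with `h ∘ g = g` is an
isomorphism. -/
def LeftMinimal {X Y : T} (g : X ⟶ Y) : Prop :=
  ∀ h : Y ⟶ Y, g ≫ h = g → IsIso h

/-- A morphism `f : X ⟶ Y` is right minimal if any `e : X ⟶ X` with `f ∘ e = f` is an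
isomorphism. -/
def RightMinimal {X Y : T} (f : X ⟶ Y) : Prop :=
  ∀ e : X ⟶ X, e ≫ f = f → IsIso e

/-- Let `T` be a Krull–Schmidt (Hom-finite, idempotent complete, `k`-linear) triangulated
category and `X' →f X →g X'' → ΣX'` a distinguished triangle.  If `g` is left minimal then
`f` is right minimal.  Consequently, if `f = 0` and `f` is right minimal, then `X' = 0`
and `g` is an isomorphism. -/
theorem stmt19 (homFin : ∀ A B : T, FiniteDimensional k (A ⟶ B))
    [IsIdempotentComplete T]
    (X' X X'' : T) (f : X' ⟶ X) (g : X ⟶ X'') (h : X'' ⟶ X'⟦(1 : ℤ)⟧)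
    (htri : Triangle.mk f g h ∈ distTriang T) :
    (LeftMinimal g → RightMinimal f) ∧
    (f = 0 → RightMinimal f → IsZero X' ∧ IsIso g) := by
  constructor
  · intro hg e he
    obtain ⟨c, hc₁, hc₂⟩ := complete_distinguished_triangle_morphism
      (Triangle.mk f g h) (Triangle.mk f g h) htri htri e (𝟙 X)
      ((Category.comp_id f).trans he.symm)
    have hciso : IsIso c := hg c (hc₁.trans (Category.id_comp g))
    let φ : Triangle.mk f g h ⟶ Triangle.mk f g h :=
      { hom₁ := e, hom₂ := 𝟙 X, hom₃ := c,
        comm₁ := (Category.comp_id f).trans he.symm,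
        comm₂ := hc₁, comm₃ := hc₂ }
    have : IsIso φ.hom₂ := by dsimp [φ]; exact IsIso.id X
    have : IsIso φ.hom₃ := hciso
    exact isIso₁_of_isIso₂₃ φ htri htri ‹_› ‹_›
  · intro hf hrm
    have h0 : IsIso (0 : X' ⟶ X') := hrm 0 (by rw [hf, zero_comp])
    have hz : IsZero X' := by
      rw [IsZero.iff_id_eq_zero]
      calc 𝟙 X' = (0 : X' ⟶ X') ≫ inv 0 := by rw [IsIso.hom_inv_id]
        _ = 0 := by rw [zero_comp]
    exact ⟨hz, (Triangle.isZero₁_iff_isIso₂ (Triangle.mk f g h) htri).1 hz⟩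
end
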